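/- arXiv:2402.13390 — 5 statements merged into one kernel-verified Lean document; each statement's English description precedes it below -/
import Mathlib

section
/- Let g1 and g2 be real Lie algebras and let ρ1 : g1 → Der(g2) and ρ2 : g2 → Der(g1) be Lie algebra homomorphisms into derivations. Define a bracket on the direct sum vector space g1 ⊕ g2 by [x,y] = [x,y]_{g1} for x,y ∈ g1, [a,b] = [a,b]_{g2} for a,b ∈ g2, and [x,a] = ρ1(x)a − ρ2(a)x for x ∈ g1, a ∈ g2. Then this bracket satisfies the Jacobi identity (hence defines a Lie algebra structure on g1 ⊕ g2) if and only if for all x,y ∈ g1 and a,b ∈ g2 one has ρ1(ρ2(a)x)b = ρ1(ρ2(b)x)a and ρ2(ρ1(x)a)y = ρ2(ρ1(y)a)x. -/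
open scoped BigOperators

section TCPDefs

variable {V V₁ V₂ W : Type*} [AddCommGroup V] [Module ℝ V]
  [AddCommGroup V₁] [Module ℝ V₁] [AddCommGroup V₂] [Module ℝ V₂]
  [AddCommGroup W] [Module ℝ W]

/-- Real-bilinearity of a two-argument map. -/
def IsBilinMap (f : V₁ → V₂ → W) : Prop :=
  (∀ x y z, f (x + y) z = f x z + f y z) ∧ (∀ (c : ℝ) x z, f (c • x) z = c • f x z) ∧
  (∀ x y z, f x (y + z) = f x y + f x z) ∧ (∀ (c : ℝ) x z, f x (c • z) = c • f x z)

/-- The Jacobi identity for a bracket. -/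
def Jacobi (l : V → V → V) : Prop :=
  ∀ u v w, l (l u v) w + l (l v w) u + l (l w u) v = 0

/-- A (real) Lie bracket: bilinear, antisymmetric, Jacobi. -/
def IsLieBracket (l : V → V → V) : Prop :=
  IsBilinMap l ∧ (∀ u v, l u v = -l v u) ∧ Jacobi l

/-- D is a derivation of the bracket l. -/
def IsDeriv (l : V → V → V) (D : V → V) : Prop :=
  ∀ u v, D (l u v) = l (D u) v + l u (D v)

/-- Compatibility of the couple (ρ1, ρ2). -/
def Compat (ρ1 : V₁ → V₂ → V₂) (ρ2 : V₂ → V₁ → V₁) : Prop :=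
  (∀ (x : V₁) (a b : V₂), ρ1 (ρ2 a x) b = ρ1 (ρ2 b x) a) ∧
  (∀ (x y : V₁) (a : V₂), ρ2 (ρ1 x a) y = ρ2 (ρ1 y a) x)

/-- The twisted cartesian product bracket on V₁ × V₂. -/
def twBr (l1 : V₁ → V₁ → V₁) (l2 : V₂ → V₂ → V₂)
    (ρ1 : V₁ → V₂ → V₂) (ρ2 : V₂ → V₁ → V₁) (u v : V₁ × V₂) : V₁ × V₂ :=
  (l1 u.1 v.1 + ρ2 u.2 v.1 - ρ2 v.2 u.1, l2 u.2 v.2 + ρ1 u.1 v.2 - ρ1 v.1 u.2)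

/-- The product almost complex structure. -/
def prodJ (J1 : V₁ → V₁) (J2 : V₂ → V₂) (u : V₁ × V₂) : V₁ × V₂ := (J1 u.1, J2 u.2)

/-- The product metric. -/
def prodK (k1 : V₁ → V₁ → ℝ) (k2 : V₂ → V₂ → ℝ) (u v : V₁ × V₂) : ℝ :=
  k1 u.1 v.1 + k2 u.2 v.2

/-- Nijenhuis tensor of J with respect to the bracket l. -/
def nijenhuis (l : V → V → V) (J : V → V) (u v : V) : V :=
  l (J u) (J v) - l u v - J (l (J u) v + l u (J v))

/-- Fundamental 2-form ω(u,v) = k(Ju, v). -/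
def fund (k : V → V → ℝ) (J : V → V) (u v : V) : ℝ := k (J u) v

/-- Chevalley–Eilenberg differential of a 2-form. -/
def d2 (l : V → V → V) (ω : V → V → ℝ) (u v w : V) : ℝ :=
  -ω (l u v) w + ω (l u w) v - ω (l v w) u

/-- Chevalley–Eilenberg differential of a 1-form. -/
def d1 (l : V → V → V) (θ : V → ℝ) (u v : V) : ℝ := -θ (l u v)

/-- Wedge product of a 1-form with a 2-form, evaluated on three vectors. -/
def wedge12 (θ : V → ℝ) (ω : V → V → ℝ) (u v w : V) : ℝ :=
  θ u * ω v w - θ v * ω u w + θ w * ω u v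

/-- The Koszul formula characterizing the Levi-Civita product of (g, k). -/
def IsLeviCivita (k : V → V → ℝ) (l : V → V → V) (nab : V → V → V) : Prop :=
  ∀ u v w, 2 * k (nab u v) w = k (l u v) w - k (l v w) u - k (l u w) v

/-- Codifferential of a 2-form ω relative to a family E (an orthonormal basis)
    and a Levi-Civita product nab:  d*ω(X) = −Σ_i (∇_{E_i}ω)(E_i, X). -/
def codiff {ι : Type*} [Fintype ι] (E : ι → V) (nab : V → V → V)
    (ω : V → V → ℝ) (X : V) : ℝ :=
  -∑ i, (-(ω (nab (E i) (E i)) X) - ω (E i) (nab (E i) X))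

/-- Lee form θ = −d*ω ∘ J. -/
def leeForm {ι : Type*} [Fintype ι] (E : ι → V) (nab : V → V → V)
    (k : V → V → ℝ) (J : V → V) (X : V) : ℝ :=
  -codiff E nab (fund k J) (J X)

/-- A family is orthonormal with respect to k. -/
def Orthonormal' {ι : Type*} [DecidableEq ι] (k : V → V → ℝ) (E : ι → V) : Prop :=
  ∀ i j, k (E i) (E j) = if i = j then 1 else 0

/-- k is an inner product: symmetric, bilinear, positive definite. -/
def IsInner (k : V → V → ℝ) : Prop :=
  IsBilinMap k ∧ (∀ u v, k u v = k v u) ∧ (∀ u, u ≠ 0 → 0 < k u u)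

/-- A Hermitian structure on the Lie algebra (V, l). -/
def IsHermitian (l : V → V → V) (J : V → V) (k : V → V → ℝ) : Prop :=
  IsInner k ∧ (∀ u, J (J u) = -u) ∧ (∀ u v, nijenhuis l J u v = 0) ∧
  (∀ u v, k (J u) (J v) = k u v)

end TCPDefs

/-! Write `u = (x, a)`, `v = (y, b)`, `w = (z, c)`. Expanding the `g₁`-component of the Jacobiator
of the twisted bracket, the Jacobi identity of `g₁` kills the `[[x, y], z]` terms, the derivation
property and antisymmetry cancel the mixed terms `[ρ₂(a) y, z]`, and the representation property
of `ρ₂` cancels the terms `ρ₂(a) ρ₂(b) z`. What survives is the cyclic sum of the defects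
`ρ₂(ρ₁(x) b) z - ρ₂(ρ₁(z) b) x` of the second compatibility condition; evaluating at
`(x, 0), (y, 0), (0, a)` isolates a single defect. The `g₂`-component is the same computation with
the roles of the two factors exchanged. -/

section TwistedProduct

variable {V₁ V₂ : Type*} [AddCommGroup V₁] [AddCommGroup V₂]

def jacobiator {V : Type*} [Add V] (l : V → V → V) (u v w : V) : V :=
  l (l u v) w + l (l v w) u + l (l w u) v

def twistDefect {U₁ U₂ : Type*} [Sub U₁] (σ : U₁ → U₂ → U₂) (ρ : U₂ → U₁ → U₁) (x y : U₁)
    (a : U₂) : U₁ :=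
  ρ (σ x a) y - ρ (σ y a) x

theorem jacobi_iff_jacobiator_eq_zero {V : Type*} [AddCommGroup V]
    (l : V → V → V) : Jacobi l ↔ ∀ u v w, jacobiator l u v w = 0 :=
  Iff.rfl

theorem compat_iff_twistDefect_eq_zero (σ : V₁ → V₂ → V₂) (ρ : V₂ → V₁ → V₁) :
    Compat σ ρ ↔
      (∀ a b x, twistDefect ρ σ a b x = 0) ∧ ∀ x y a, twistDefect σ ρ x y a = 0 := by
  simp only [Compat, twistDefect, sub_eq_zero]
  exact and_congr_left' ⟨fun h a b x => h x a b, fun h x a b => h a b x⟩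

theorem IsDeriv.apply_eq_sub {l : V₁ → V₁ → V₁} {D : V₁ → V₁} (hD : IsDeriv l D)
    (hanti : ∀ u v, l u v = -l v u) (u v : V₁) : D (l u v) = l (D u) v - l (D v) u := by
  rw [hD, hanti u, sub_eq_add_neg]

theorem twBr_swap (l1 : V₁ → V₁ → V₁) (l2 : V₂ → V₂ → V₂) (σ : V₁ → V₂ → V₂)
    (ρ : V₂ → V₁ → V₁) (u v : V₁ × V₂) :
    twBr l2 l1 ρ σ u.swap v.swap = (twBr l1 l2 σ ρ u v).swap :=
  rfl

theorem jacobiator_twBr_swap (l1 : V₁ → V₁ → V₁) (l2 : V₂ → V₂ → V₂) (σ : V₁ → V₂ → V₂)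
    (ρ : V₂ → V₁ → V₁) (u v w : V₁ × V₂) :
    jacobiator (twBr l2 l1 ρ σ) u.swap v.swap w.swap = (jacobiator (twBr l1 l2 σ ρ) u v w).swap := by
  simp only [jacobiator, twBr_swap, Prod.swap_add]

theorem jacobi_twBr_iff (l1 : V₁ → V₁ → V₁) (l2 : V₂ → V₂ → V₂) (σ : V₁ → V₂ → V₂)
    (ρ : V₂ → V₁ → V₁) :
    Jacobi (twBr l1 l2 σ ρ) ↔
      (∀ u v w, (jacobiator (twBr l1 l2 σ ρ) u v w).1 = 0) ∧
        ∀ u v w, (jacobiator (twBr l2 l1 ρ σ) u v w).1 = 0 := by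
  simp only [jacobi_iff_jacobiator_eq_zero, Prod.ext_iff, Prod.fst_zero, Prod.snd_zero,
    forall_and]
  rw [Prod.swap_surjective.forall₃ (p := fun u v w => (jacobiator (twBr l2 l1 ρ σ) u v w).1 = 0)]
  simp only [jacobiator_twBr_swap, Prod.fst_swap]

variable [Module ℝ V₁] [Module ℝ V₂] {W : Type*} [AddCommGroup W] [Module ℝ W]

namespace IsBilinMap

variable {f : V₁ → V₂ → W}

theorem map_zero_left (hf : IsBilinMap f) (z : V₂) : f 0 z = 0 := by
  simpa using hf.2.1 0 0 z

theorem map_zero_right (hf : IsBilinMap f) (x : V₁) : f x 0 = 0 := by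
  simpa using hf.2.2.2 0 x 0

theorem map_sub_left (hf : IsBilinMap f) (x y : V₁) (z : V₂) :
    f (x - y) z = f x z - f y z :=
  eq_sub_of_add_eq (by rw [← hf.1, sub_add_cancel])

theorem map_sub_right (hf : IsBilinMap f) (x : V₁) (y z : V₂) :
    f x (y - z) = f x y - f x z :=
  eq_sub_of_add_eq (by rw [← hf.2.2.1, sub_add_cancel])

end IsBilinMap

theorem LinearMap.isBilinMap_apply (f : V₁ →ₗ[ℝ] V₂ →ₗ[ℝ] W) : IsBilinMap fun x y => f x y :=
  ⟨fun _ _ _ => by simp, fun _ _ _ => by simp, fun _ _ _ => by simp, fun _ _ _ => by simp⟩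

variable {l1 : V₁ → V₁ → V₁} {l2 : V₂ → V₂ → V₂} {σ : V₁ → V₂ → V₂} {ρ : V₂ → V₁ → V₁}

theorem jacobiator_twBr_fst (hl1 : IsLieBracket l1) (hρ : IsBilinMap ρ)
    (hd : ∀ a, IsDeriv l1 (ρ a)) (hrep : ∀ a b y, ρ (l2 a b) y = ρ a (ρ b y) - ρ b (ρ a y))
    (x y z : V₁) (a b c : V₂) :
    (jacobiator (twBr l1 l2 σ ρ) (x, a) (y, b) (z, c)).1 =
      twistDefect σ ρ x z b + twistDefect σ ρ z y a + twistDefect σ ρ y x c := by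
  obtain ⟨hb, hanti, hjac⟩ := hl1
  have hjac' : l1 (l1 x y) z = -(l1 (l1 y z) x + l1 (l1 z x) y) :=
    eq_neg_of_add_eq_zero_left (by rw [← add_assoc]; exact hjac x y z)
  simp only [jacobiator, twBr, twistDefect, Prod.fst_add, hb.1, hb.map_sub_left, hρ.1,
    hρ.map_sub_left, hρ.2.2.1, hρ.map_sub_right, hrep, (hd _).apply_eq_sub hanti, hjac']
  abel

theorem forall_jacobiator_twBr_fst_eq_zero_iff (hl1 : IsLieBracket l1) (hσ : IsBilinMap σ)
    (hρ : IsBilinMap ρ) (hd : ∀ a, IsDeriv l1 (ρ a))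
    (hrep : ∀ a b y, ρ (l2 a b) y = ρ a (ρ b y) - ρ b (ρ a y)) :
    (∀ u v w, (jacobiator (twBr l1 l2 σ ρ) u v w).1 = 0) ↔ ∀ x y a, twistDefect σ ρ x y a = 0 := by
  constructor
  · intro h x y a
    simpa [jacobiator_twBr_fst hl1 hρ hd hrep, twistDefect, hσ.map_zero_right,
      hρ.map_zero_left] using h (y, 0) (x, 0) (0, a)
  · rintro h ⟨x, a⟩ ⟨y, b⟩ ⟨z, c⟩
    simp only [jacobiator_twBr_fst hl1 hρ hd hrep, h, add_zero]

end TwistedProduct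

theorem twisted_product_jacobi_iff_compat_general
    {V₁ V₂ : Type*} [AddCommGroup V₁] [Module ℝ V₁]
    [AddCommGroup V₂] [Module ℝ V₂]
    (l1 : V₁ → V₁ → V₁) (l2 : V₂ → V₂ → V₂)
    (hl1 : IsLieBracket l1) (hl2 : IsLieBracket l2)
    (ρ1 : V₁ →ₗ[ℝ] Module.End ℝ V₂) (ρ2 : V₂ →ₗ[ℝ] Module.End ℝ V₁)
    (hd1 : ∀ x, IsDeriv l2 (ρ1 x)) (hd2 : ∀ a, IsDeriv l1 (ρ2 a))
    (hrep1 : ∀ x y, ρ1 (l1 x y) = ρ1 x * ρ1 y - ρ1 y * ρ1 x)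
    (hrep2 : ∀ a b, ρ2 (l2 a b) = ρ2 a * ρ2 b - ρ2 b * ρ2 a) :
    Jacobi (twBr l1 l2 (fun x a => ρ1 x a) (fun a x => ρ2 a x)) ↔
      Compat (fun x a => ρ1 x a) (fun a x => ρ2 a x) := by
  rw [jacobi_twBr_iff,
    forall_jacobiator_twBr_fst_eq_zero_iff hl1 ρ1.isBilinMap_apply ρ2.isBilinMap_apply hd2
      fun a b y => by simp [hrep2],
    forall_jacobiator_twBr_fst_eq_zero_iff hl2 ρ2.isBilinMap_apply ρ1.isBilinMap_apply hd1
      fun x y b => by simp [hrep1],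
    compat_iff_twistDefect_eq_zero]
  exact and_comm

/-- the twisted bracket satisfies the Jacobi identity iff the
compatibility conditions on (ρ1, ρ2) hold. -/
theorem twisted_product_jacobi_iff_compat
    {V₁ V₂ : Type*} [AddCommGroup V₁] [Module ℝ V₁] [FiniteDimensional ℝ V₁]
    [AddCommGroup V₂] [Module ℝ V₂] [FiniteDimensional ℝ V₂]
    (l1 : V₁ → V₁ → V₁) (l2 : V₂ → V₂ → V₂)
    (hl1 : IsLieBracket l1) (hl2 : IsLieBracket l2)
    (ρ1 : V₁ →ₗ[ℝ] Module.End ℝ V₂) (ρ2 : V₂ →ₗ[ℝ] Module.End ℝ V₁)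
    (hd1 : ∀ x, IsDeriv l2 (ρ1 x)) (hd2 : ∀ a, IsDeriv l1 (ρ2 a))
    (hrep1 : ∀ x y, ρ1 (l1 x y) = ρ1 x * ρ1 y - ρ1 y * ρ1 x)
    (hrep2 : ∀ a b, ρ2 (l2 a b) = ρ2 a * ρ2 b - ρ2 b * ρ2 a) :
    Jacobi (twBr l1 l2 (fun x a => ρ1 x a) (fun a x => ρ2 a x)) ↔
      Compat (fun x a => ρ1 x a) (fun a x => ρ2 a x) :=
  twisted_product_jacobi_iff_compat_general l1 l2 hl1 hl2 ρ1 ρ2 hd1 hd2 hrep1 hrep2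
end

section
/- Let (g1, J1) and (g2, J2) be real Lie algebras each equipped with an integrable almost complex structure (i.e., Ji² = −Id and the Nijenhuis tensor of Ji vanishes), and let (ρ1, ρ2) be a compatible couple of representations defining the twisted cartesian product g = g1 ⋈ g2. Define J on g = g1 ⊕ g2 by J(x + a) = J1(x) + J2(a). Then the Nijenhuis tensor of J vanishes on g if and only if for all x ∈ g1 and a ∈ g2: [ρ1(J1 x), J2] = J2 ∘ ρ1(x) ∘ J2 + ρ1(x) and [ρ2(J2 a), J1] = J1 ∘ ρ2(a) ∘ J1 + ρ2(a), where [A, B] = A∘B − B∘A denotes the commutator of endomorphisms. -/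
open scoped BigOperators

/-! The Nijenhuis tensor of `J₁ ⊕ J₂` on `g₁ ⋈ g₂` splits into the Nijenhuis tensors of `J₁`
and `J₂` plus cross terms that are linear in each `ρᵢ`.  Evaluated on `(x, 0)` and `(0, a)` it
reduces to the cross terms alone, which are exactly the differences of the two sides of the
stated identities. -/

section TwistedProduct

variable {V W : Type*} [AddCommGroup V] [Module ℝ V] [AddCommGroup W] [Module ℝ W]

def mixedNijenhuis (J : Module.End ℝ V) (J' : Module.End ℝ W) (ρ : W → Module.End ℝ V)
    (w : W) : Module.End ℝ V :=
  ρ (J' w) * J - J * ρ (J' w) - (J * ρ w * J + ρ w)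

theorem mixedNijenhuis_eq_zero_iff (J : Module.End ℝ V) (J' : Module.End ℝ W)
    (ρ : W → Module.End ℝ V) (w : W) :
    mixedNijenhuis J J' ρ w = 0 ↔ ρ (J' w) * J - J * ρ (J' w) = J * ρ w * J + ρ w :=
  sub_eq_zero

end TwistedProduct

section TwistedProductNijenhuis

variable {V₁ V₂ : Type*} [AddCommGroup V₁] [Module ℝ V₁] [AddCommGroup V₂] [Module ℝ V₂]
  (l1 : V₁ → V₁ → V₁) (l2 : V₂ → V₂ → V₂) (J1 : Module.End ℝ V₁) (J2 : Module.End ℝ V₂)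
  (ρ1 : V₁ → Module.End ℝ V₂) (ρ2 : V₂ → Module.End ℝ V₁)

theorem nijenhuis_twBr_prodJ (x y : V₁) (a b : V₂) :
    nijenhuis (twBr l1 l2 (fun x a => ρ1 x a) (fun a x => ρ2 a x)) (prodJ J1 J2) (x, a) (y, b) =
      (nijenhuis l1 J1 x y + mixedNijenhuis J1 J2 ρ2 a y - mixedNijenhuis J1 J2 ρ2 b x,
        nijenhuis l2 J2 a b + mixedNijenhuis J2 J1 ρ1 x b - mixedNijenhuis J2 J1 ρ1 y a) := by
  simp only [nijenhuis, twBr, prodJ, mixedNijenhuis, LinearMap.sub_apply, LinearMap.add_apply,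
    Module.End.mul_apply, map_add, map_sub, Prod.mk_add_mk, Prod.mk_sub_mk, Prod.ext_iff]
  constructor <;> abel

theorem nijenhuis_twBr_prodJ_eq_zero_iff (hJ1 : ∀ u v, nijenhuis l1 J1 u v = 0)
    (hJ2 : ∀ u v, nijenhuis l2 J2 u v = 0) :
    (∀ u v, nijenhuis (twBr l1 l2 (fun x a => ρ1 x a) (fun a x => ρ2 a x))
        (prodJ J1 J2) u v = 0) ↔
      (∀ x, mixedNijenhuis J2 J1 ρ1 x = 0) ∧ (∀ a, mixedNijenhuis J1 J2 ρ2 a = 0) := by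
  constructor
  · intro h
    have hcross : ∀ x b, mixedNijenhuis J1 J2 ρ2 b x = 0 ∧ mixedNijenhuis J2 J1 ρ1 x b = 0 := by
      intro x b
      simpa [nijenhuis_twBr_prodJ, hJ1, hJ2] using h (x, 0) (0, b)
    exact ⟨fun x => LinearMap.ext fun b => (hcross x b).2,
      fun a => LinearMap.ext fun x => (hcross x a).1⟩
  · rintro ⟨h1, h2⟩ ⟨x, a⟩ ⟨y, b⟩
    simp [nijenhuis_twBr_prodJ, hJ1, hJ2, h1, h2]

end TwistedProductNijenhuis

theorem product_J_integrable_iff_general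
    {V₁ V₂ : Type*} [AddCommGroup V₁] [Module ℝ V₁]
    [AddCommGroup V₂] [Module ℝ V₂]
    (l1 : V₁ → V₁ → V₁) (l2 : V₂ → V₂ → V₂)
    (J1 : Module.End ℝ V₁) (J2 : Module.End ℝ V₂)
    (hJ1int : ∀ u v, nijenhuis l1 (⇑J1) u v = 0)
    (hJ2int : ∀ u v, nijenhuis l2 (⇑J2) u v = 0)
    (ρ1 : V₁ →ₗ[ℝ] Module.End ℝ V₂) (ρ2 : V₂ →ₗ[ℝ] Module.End ℝ V₁) :
    (∀ u v, nijenhuis (twBr l1 l2 (fun x a => ρ1 x a) (fun a x => ρ2 a x))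
        (prodJ (⇑J1) (⇑J2)) u v = 0) ↔
      ((∀ x : V₁, ρ1 (J1 x) * J2 - J2 * ρ1 (J1 x) = J2 * ρ1 x * J2 + ρ1 x) ∧
       (∀ a : V₂, ρ2 (J2 a) * J1 - J1 * ρ2 (J2 a) = J1 * ρ2 a * J1 + ρ2 a)) := by
  rw [nijenhuis_twBr_prodJ_eq_zero_iff l1 l2 J1 J2 ρ1 ρ2 hJ1int hJ2int]
  simp only [mixedNijenhuis_eq_zero_iff]

/-- the product complex structure J = J1 ⊕ J2 on the twisted
cartesian product has vanishing Nijenhuis tensor iff the two stated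
endomorphism identities hold. -/
theorem product_J_integrable_iff
    {V₁ V₂ : Type*} [AddCommGroup V₁] [Module ℝ V₁] [FiniteDimensional ℝ V₁]
    [AddCommGroup V₂] [Module ℝ V₂] [FiniteDimensional ℝ V₂]
    (l1 : V₁ → V₁ → V₁) (l2 : V₂ → V₂ → V₂)
    (hl1 : IsLieBracket l1) (hl2 : IsLieBracket l2)
    (J1 : Module.End ℝ V₁) (J2 : Module.End ℝ V₂)
    (hJ1sq : ∀ u, J1 (J1 u) = -u) (hJ2sq : ∀ u, J2 (J2 u) = -u)
    (hJ1int : ∀ u v, nijenhuis l1 (⇑J1) u v = 0)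
    (hJ2int : ∀ u v, nijenhuis l2 (⇑J2) u v = 0)
    (ρ1 : V₁ →ₗ[ℝ] Module.End ℝ V₂) (ρ2 : V₂ →ₗ[ℝ] Module.End ℝ V₁)
    (hd1 : ∀ x, IsDeriv l2 (ρ1 x)) (hd2 : ∀ a, IsDeriv l1 (ρ2 a))
    (hrep1 : ∀ x y, ρ1 (l1 x y) = ρ1 x * ρ1 y - ρ1 y * ρ1 x)
    (hrep2 : ∀ a b, ρ2 (l2 a b) = ρ2 a * ρ2 b - ρ2 b * ρ2 a)
    (hcompat : Compat (fun x a => ρ1 x a) (fun a x => ρ2 a x)) :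
    (∀ u v, nijenhuis (twBr l1 l2 (fun x a => ρ1 x a) (fun a x => ρ2 a x))
        (prodJ (⇑J1) (⇑J2)) u v = 0) ↔
      ((∀ x : V₁, ρ1 (J1 x) * J2 - J2 * ρ1 (J1 x) = J2 * ρ1 x * J2 + ρ1 x) ∧
       (∀ a : V₂, ρ2 (J2 a) * J1 - J1 * ρ2 (J2 a) = J1 * ρ2 a * J1 + ρ2 a)) :=
  product_J_integrable_iff_general l1 l2 J1 J2 hJ1int hJ2int ρ1 ρ2
end

section
/- With the hypotheses of the twisted cartesian product construction, if ρ1(x) commutes with J2 for every x ∈ g1 and ρ2(a) commutes with J1 for every a ∈ g2, then the product complex structure J(x + a) = J1(x) + J2(a) on g1 ⋈ g2 has vanishing Nijenhuis tensor. -/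
open scoped BigOperators

/-! Each component of the Nijenhuis tensor of `J = J₁ × J₂` on `g₁ ⋈ g₂` is the Nijenhuis
tensor of the corresponding factor plus cross terms `ρ(J a)(J x) - ρ a x - J (ρ(J a) x + ρ a (J x))`.
When `ρ a` commutes with `J` and `J² = -1`, the cross terms vanish, because
`ρ(J a)(J x) = J ρ(J a) x` and `J ρ a (J x) = -ρ a x`. -/

def crossNijenhuis {V₁ V₂ : Type*} [AddCommGroup V₁] (ρ : V₂ → V₁ → V₁) (J₂ : V₂ → V₂)
    (J₁ : V₁ → V₁) (a : V₂) (x : V₁) : V₁ :=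
  ρ (J₂ a) (J₁ x) - ρ a x - J₁ (ρ (J₂ a) x + ρ a (J₁ x))

theorem crossNijenhuis_eq_zero {V₁ V₂ F₁ : Type*} [AddCommGroup V₁] [FunLike F₁ V₁ V₁]
    [AddMonoidHomClass F₁ V₁ V₁] {ρ : V₂ → V₁ → V₁} {J₂ : V₂ → V₂} {J₁ : F₁}
    (hsq : ∀ x, J₁ (J₁ x) = -x) (hcomm : ∀ a x, ρ a (J₁ x) = J₁ (ρ a x)) (a : V₂) (x : V₁) :
    crossNijenhuis ρ J₂ J₁ a x = 0 := by
  simp only [crossNijenhuis, hcomm, map_add, hsq]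
  abel

section TwistedProduct

variable {V₁ V₂ F₁ F₂ : Type*} [AddCommGroup V₁] [AddCommGroup V₂]
  [FunLike F₁ V₁ V₁] [AddMonoidHomClass F₁ V₁ V₁] [FunLike F₂ V₂ V₂] [AddMonoidHomClass F₂ V₂ V₂]

theorem fst_nijenhuis_twBr (l1 : V₁ → V₁ → V₁) (l2 : V₂ → V₂ → V₂) (ρ1 : V₁ → V₂ → V₂)
    (ρ2 : V₂ → V₁ → V₁) (J₁ : F₁) (J₂ : V₂ → V₂) (u v : V₁ × V₂) :
    (nijenhuis (twBr l1 l2 ρ1 ρ2) (prodJ J₁ J₂) u v).1 =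
      nijenhuis l1 J₁ u.1 v.1 + crossNijenhuis ρ2 J₂ J₁ u.2 v.1 -
        crossNijenhuis ρ2 J₂ J₁ v.2 u.1 := by
  simp only [nijenhuis, crossNijenhuis, twBr, prodJ, Prod.fst_sub, Prod.fst_add, map_add,
    map_sub]
  abel

theorem snd_nijenhuis_twBr (l1 : V₁ → V₁ → V₁) (l2 : V₂ → V₂ → V₂) (ρ1 : V₁ → V₂ → V₂)
    (ρ2 : V₂ → V₁ → V₁) (J₁ : V₁ → V₁) (J₂ : F₂) (u v : V₁ × V₂) :
    (nijenhuis (twBr l1 l2 ρ1 ρ2) (prodJ J₁ J₂) u v).2 =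
      nijenhuis l2 J₂ u.2 v.2 + crossNijenhuis ρ1 J₁ J₂ u.1 v.2 -
        crossNijenhuis ρ1 J₁ J₂ v.1 u.2 := by
  simp only [nijenhuis, crossNijenhuis, twBr, prodJ, Prod.snd_sub, Prod.snd_add, map_add,
    map_sub]
  abel

end TwistedProduct

theorem product_J_integrable_of_commute_general
    {V₁ V₂ : Type*} [AddCommGroup V₁] [Module ℝ V₁]
    [AddCommGroup V₂] [Module ℝ V₂]
    (l1 : V₁ → V₁ → V₁) (l2 : V₂ → V₂ → V₂)
    (J1 : Module.End ℝ V₁) (J2 : Module.End ℝ V₂)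
    (hJ1sq : ∀ u, J1 (J1 u) = -u) (hJ2sq : ∀ u, J2 (J2 u) = -u)
    (hJ1int : ∀ u v, nijenhuis l1 (⇑J1) u v = 0)
    (hJ2int : ∀ u v, nijenhuis l2 (⇑J2) u v = 0)
    (ρ1 : V₁ →ₗ[ℝ] Module.End ℝ V₂) (ρ2 : V₂ →ₗ[ℝ] Module.End ℝ V₁)
    (hcomm1 : ∀ x : V₁, ρ1 x * J2 = J2 * ρ1 x)
    (hcomm2 : ∀ a : V₂, ρ2 a * J1 = J1 * ρ2 a) :
    ∀ u v, nijenhuis (twBr l1 l2 (fun x a => ρ1 x a) (fun a x => ρ2 a x))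
        (prodJ (⇑J1) (⇑J2)) u v = 0 := by
  have hc1 (x : V₁) (c : V₂) : ρ1 x (J2 c) = J2 (ρ1 x c) := LinearMap.congr_fun (hcomm1 x) c
  have hc2 (a : V₂) (y : V₁) : ρ2 a (J1 y) = J1 (ρ2 a y) := LinearMap.congr_fun (hcomm2 a) y
  intro u v
  ext
  · rw [fst_nijenhuis_twBr, hJ1int, crossNijenhuis_eq_zero hJ1sq hc2,
      crossNijenhuis_eq_zero hJ1sq hc2]
    simp
  · rw [snd_nijenhuis_twBr, hJ2int, crossNijenhuis_eq_zero hJ2sq hc1,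
      crossNijenhuis_eq_zero hJ2sq hc1]
    simp

/-- if ρ1(x) commutes with J2 and ρ2(a) commutes with J1, then
the product complex structure on the twisted cartesian product has vanishing
Nijenhuis tensor. -/
theorem product_J_integrable_of_commute
    {V₁ V₂ : Type*} [AddCommGroup V₁] [Module ℝ V₁] [FiniteDimensional ℝ V₁]
    [AddCommGroup V₂] [Module ℝ V₂] [FiniteDimensional ℝ V₂]
    (l1 : V₁ → V₁ → V₁) (l2 : V₂ → V₂ → V₂)
    (hl1 : IsLieBracket l1) (hl2 : IsLieBracket l2)
    (J1 : Module.End ℝ V₁) (J2 : Module.End ℝ V₂)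
    (hJ1sq : ∀ u, J1 (J1 u) = -u) (hJ2sq : ∀ u, J2 (J2 u) = -u)
    (hJ1int : ∀ u v, nijenhuis l1 (⇑J1) u v = 0)
    (hJ2int : ∀ u v, nijenhuis l2 (⇑J2) u v = 0)
    (ρ1 : V₁ →ₗ[ℝ] Module.End ℝ V₂) (ρ2 : V₂ →ₗ[ℝ] Module.End ℝ V₁)
    (hd1 : ∀ x, IsDeriv l2 (ρ1 x)) (hd2 : ∀ a, IsDeriv l1 (ρ2 a))
    (hrep1 : ∀ x y, ρ1 (l1 x y) = ρ1 x * ρ1 y - ρ1 y * ρ1 x)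
    (hrep2 : ∀ a b, ρ2 (l2 a b) = ρ2 a * ρ2 b - ρ2 b * ρ2 a)
    (hcompat : Compat (fun x a => ρ1 x a) (fun a x => ρ2 a x))
    (hcomm1 : ∀ x : V₁, ρ1 x * J2 = J2 * ρ1 x)
    (hcomm2 : ∀ a : V₂, ρ2 a * J1 = J1 * ρ2 a) :
    ∀ u v, nijenhuis (twBr l1 l2 (fun x a => ρ1 x a) (fun a x => ρ2 a x))
        (prodJ (⇑J1) (⇑J2)) u v = 0 :=
  product_J_integrable_of_commute_general l1 l2 J1 J2 hJ1sq hJ2sq hJ1int hJ2int ρ1 ρ2 hcomm1 hcomm2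
end

section
/- Let (g1 ⋈ g2, J, k) be a Hermitian twisted cartesian product, with Lee forms θ1, θ2 of (g1, J1, k1) and (g2, J2, k2). Then the Lee form θ of (g1 ⋈ g2, J, k) is given by θ(x) = θ1(x) − tr(ρ1(x)) for x ∈ g1 and θ(a) = θ2(a) − tr(ρ2(a)) for a ∈ g2, where tr(ρ1(x)) is the trace of ρ1(x) ∈ End(g2) and tr(ρ2(a)) of ρ2(a) ∈ End(g1). -/
open scoped BigOperators

/-! By the Koszul formula, `2 θ(X) = -∑ᵢ T(Eᵢ, X)` for an orthonormal basis `(Eᵢ)`, where `T = leeTerm`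
involves only the bracket, the metric and `J`. For `X = (x, 0)` the basis vectors `(e, 0)` of `g₁`
contribute exactly the terms of `θ₁(x)`, while a basis vector `(0, a)` of `g₂` contributes
`2 k₂(ρ₁(x) a, a)`: the two other nonzero terms cancel because `ρ₁(J₁ x)` commutes with `J₂` and
`J₂` is `k₂`-skew. Summed over an orthonormal basis of `g₂` these give `2 tr ρ₁(x)`. The case
`X = (0, a)` follows by exchanging the factors, which carries the twisted bracket of `(ρ₁, ρ₂)` to
that of `(ρ₂, ρ₁)`. -/

section LeeTerm

variable {V V' : Type*}

def leeTerm (k : V → V → ℝ) (l : V → V → V) (J : V → V) (e X : V) : ℝ :=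
  k (l e e) X - 2 * k (l e X) e + k (l e (J X)) (J e) - k (l (J X) (J e)) e - k (l e (J e)) (J X)

lemma two_mul_leeForm {ι : Type*} [Fintype ι] {k : V → V → ℝ} {l : V → V → V} {J : V → V}
    (hsym : ∀ u v, k u v = k v u) (hkJ : ∀ u v, k (J u) (J v) = k u v)
    {nab : V → V → V} (hnab : IsLeviCivita k l nab) (E : ι → V) (X : V) :
    2 * leeForm E nab k J X = -∑ i, leeTerm k l J (E i) X := by
  simp only [leeForm, codiff, fund, neg_neg, Finset.mul_sum, ← Finset.sum_neg_distrib]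
  refine Finset.sum_congr rfl fun i _ => ?_
  have h1 := hkJ (nab (E i) (E i)) X
  have h2 := hsym (J (E i)) (nab (E i) (J X))
  have h3 := hnab (E i) (E i) X
  have h4 := hnab (E i) (J X) (J (E i))
  simp only [leeTerm]
  linarith

lemma leeTerm_map {k : V → V → ℝ} {l : V → V → V} {J : V → V}
    {k' : V' → V' → ℝ} {l' : V' → V' → V'} {J' : V' → V'} (φ : V → V')
    (hk : ∀ u v, k' (φ u) (φ v) = k u v) (hl : ∀ u v, l' (φ u) (φ v) = φ (l u v))
    (hJ : ∀ u, J' (φ u) = φ (J u)) (e X : V) :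
    leeTerm k' l' J' (φ e) (φ X) = leeTerm k l J e X := by
  simp only [leeTerm, hJ, hl, hk]

end LeeTerm

section Bilinear

variable {V V₁ V₂ W : Type*} [AddCommGroup V] [Module ℝ V]
  [AddCommGroup V₁] [Module ℝ V₁] [AddCommGroup V₂] [Module ℝ V₂] [AddCommGroup W] [Module ℝ W]

namespace IsBilinMap

lemma zero_left {f : V₁ → V₂ → W} (h : IsBilinMap f) (z : V₂) : f 0 z = 0 := by
  simpa using h.2.1 0 0 z

lemma zero_right {f : V₁ → V₂ → W} (h : IsBilinMap f) (x : V₁) : f x 0 = 0 := by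
  simpa using h.2.2.2 0 x 0

lemma neg_left {f : V₁ → V₂ → W} (h : IsBilinMap f) (x : V₁) (z : V₂) : f (-x) z = -f x z := by
  simpa using h.2.1 (-1) x z

lemma sum_smul_left {f : V₁ → V₂ → ℝ} (h : IsBilinMap f) {ι : Type*} (s : Finset ι)
    (c : ι → ℝ) (v : ι → V₁) (z : V₂) :
    f (∑ i ∈ s, c i • v i) z = ∑ i ∈ s, c i * f (v i) z := by
  classical
  induction s using Finset.induction_on with
  | empty => simpa using h.zero_left z
  | insert i s hi ih => rw [Finset.sum_insert hi, h.1, h.2.1, ih, Finset.sum_insert hi, smul_eq_mul]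

end IsBilinMap

lemma apply_complexStructure_left {k : V → V → ℝ} {J : V → V} (hk : IsBilinMap k)
    (hJ : ∀ u, J (J u) = -u) (hkJ : ∀ u v, k (J u) (J v) = k u v) (u v : V) :
    k (J u) v = -k u (J v) := by
  rw [← hkJ, hJ, hk.neg_left]

lemma trace_eq_sum_orthonormal {ι : Type*} [Fintype ι] [DecidableEq ι] {k : V → V → ℝ}
    (hk : IsBilinMap k) (b : Module.Basis ι ℝ V) (hb : Orthonormal' k ⇑b) (A : Module.End ℝ V) :
    LinearMap.trace ℝ V A = ∑ i, k (A (b i)) (b i) := by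
  rw [LinearMap.trace_eq_matrix_trace ℝ b A, Matrix.trace]
  refine Finset.sum_congr rfl fun i _ => ?_
  rw [Matrix.diag_apply, LinearMap.toMatrix_apply, ← b.sum_repr (A (b i)), hk.sum_smul_left]
  simp [hb _ i]

end Bilinear

section TwistedProduct

variable {V₁ V₂ : Type*}

lemma prodK_comm {k1 : V₁ → V₁ → ℝ} {k2 : V₂ → V₂ → ℝ} (h1 : ∀ u v, k1 u v = k1 v u)
    (h2 : ∀ u v, k2 u v = k2 v u) (u v : V₁ × V₂) : prodK k1 k2 u v = prodK k1 k2 v u := by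
  rw [prodK, prodK, h1, h2]

lemma prodK_prodJ {k1 : V₁ → V₁ → ℝ} {k2 : V₂ → V₂ → ℝ} {J1 : V₁ → V₁} {J2 : V₂ → V₂}
    (h1 : ∀ u v, k1 (J1 u) (J1 v) = k1 u v) (h2 : ∀ u v, k2 (J2 u) (J2 v) = k2 u v)
    (u v : V₁ × V₂) : prodK k1 k2 (prodJ J1 J2 u) (prodJ J1 J2 v) = prodK k1 k2 u v := by
  rw [prodK, prodK, prodJ, prodJ, h1, h2]

lemma leeTerm_swap [AddCommGroup V₁] [AddCommGroup V₂] (k1 : V₁ → V₁ → ℝ) (k2 : V₂ → V₂ → ℝ)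
    (l1 : V₁ → V₁ → V₁) (l2 : V₂ → V₂ → V₂) (ρ1 : V₁ → V₂ → V₂) (ρ2 : V₂ → V₁ → V₁)
    (J1 : V₁ → V₁) (J2 : V₂ → V₂) (e X : V₁ × V₂) :
    leeTerm (prodK k2 k1) (twBr l2 l1 ρ2 ρ1) (prodJ J2 J1) e.swap X.swap =
      leeTerm (prodK k1 k2) (twBr l1 l2 ρ1 ρ2) (prodJ J1 J2) e X :=
  leeTerm_map (k := prodK k1 k2) (l := twBr l1 l2 ρ1 ρ2) (J := prodJ J1 J2) Prod.swap
    (fun _ _ => add_comm _ _) (fun _ _ => rfl) (fun _ => rfl) e X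

variable [AddCommGroup V₁] [Module ℝ V₁] [AddCommGroup V₂] [Module ℝ V₂]
  {l1 : V₁ → V₁ → V₁} {l2 : V₂ → V₂ → V₂} {k1 : V₁ → V₁ → ℝ} {k2 : V₂ → V₂ → ℝ}
  {J1 : Module.End ℝ V₁} {J2 : Module.End ℝ V₂}
  {ρ1 : V₁ →ₗ[ℝ] Module.End ℝ V₂} {ρ2 : V₂ →ₗ[ℝ] Module.End ℝ V₁}

lemma leeTerm_twBr_inl_inl (hl2 : IsBilinMap l2) (hk2 : IsBilinMap k2) (e x : V₁) :
    leeTerm (prodK k1 k2) (twBr l1 l2 (fun x a => ρ1 x a) (fun a x => ρ2 a x)) (prodJ J1 J2)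
      (e, 0) (x, 0) = leeTerm k1 l1 J1 e x := by
  simp [leeTerm, twBr, prodK, prodJ, hl2.zero_left, hk2.zero_left]

lemma leeTerm_twBr_inr_inl (hl1 : IsBilinMap l1) (hl2 : IsBilinMap l2) (hk1 : IsBilinMap k1)
    (hk2 : IsBilinMap k2) (hJ2 : ∀ u v, k2 (J2 u) v = -k2 u (J2 v))
    (hcomm : ∀ x, ρ1 x * J2 = J2 * ρ1 x) (a : V₂) (x : V₁) :
    leeTerm (prodK k1 k2) (twBr l1 l2 (fun x a => ρ1 x a) (fun a x => ρ2 a x)) (prodJ J1 J2)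
      (0, a) (x, 0) = 2 * k2 (ρ1 x a) a := by
  have hρJ : ρ1 (J1 x) (J2 a) = J2 (ρ1 (J1 x) a) := LinearMap.congr_fun (hcomm (J1 x)) a
  simp [leeTerm, twBr, prodK, prodJ, hl1.zero_left, hl2.zero_left, hl2.zero_right,
    hk1.zero_left, hk1.zero_right, hk2.zero_right, hk2.neg_left, hρJ, hJ2]

lemma sum_leeTerm_twBr_inl {ι₁ ι₂ : Type*} [Fintype ι₁] [Fintype ι₂] [DecidableEq ι₂]
    (hl1 : IsBilinMap l1) (hl2 : IsBilinMap l2) (hk1 : IsBilinMap k1) (hk2 : IsBilinMap k2)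
    (hJ2 : ∀ u v, k2 (J2 u) v = -k2 u (J2 v)) (hcomm : ∀ x, ρ1 x * J2 = J2 * ρ1 x)
    (b1 : ι₁ → V₁) (b2 : Module.Basis ι₂ ℝ V₂) (hb2 : Orthonormal' k2 ⇑b2) (x : V₁) :
    ∑ i, leeTerm (prodK k1 k2) (twBr l1 l2 (fun x a => ρ1 x a) (fun a x => ρ2 a x))
        (prodJ J1 J2) (Sum.elim (fun i => (b1 i, 0)) (fun j => (0, b2 j)) i) (x, 0) =
      ∑ i, leeTerm k1 l1 J1 (b1 i) x + 2 * LinearMap.trace ℝ V₂ (ρ1 x) := by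
  simp only [Fintype.sum_sum_type, Sum.elim_inl, Sum.elim_inr, leeTerm_twBr_inl_inl hl2 hk2,
    leeTerm_twBr_inr_inl hl1 hl2 hk1 hk2 hJ2 hcomm, trace_eq_sum_orthonormal hk2 b2 hb2,
    Finset.mul_sum]

lemma sum_leeTerm_twBr_inr {ι₁ ι₂ : Type*} [Fintype ι₁] [DecidableEq ι₁] [Fintype ι₂]
    (hl1 : IsBilinMap l1) (hl2 : IsBilinMap l2) (hk1 : IsBilinMap k1) (hk2 : IsBilinMap k2)
    (hJ1 : ∀ u v, k1 (J1 u) v = -k1 u (J1 v)) (hcomm : ∀ a, ρ2 a * J1 = J1 * ρ2 a)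
    (b1 : Module.Basis ι₁ ℝ V₁) (hb1 : Orthonormal' k1 ⇑b1) (b2 : ι₂ → V₂) (a : V₂) :
    ∑ i, leeTerm (prodK k1 k2) (twBr l1 l2 (fun x a => ρ1 x a) (fun a x => ρ2 a x))
        (prodJ J1 J2) (Sum.elim (fun i => (b1 i, 0)) (fun j => (0, b2 j)) i) (0, a) =
      ∑ j, leeTerm k2 l2 J2 (b2 j) a + 2 * LinearMap.trace ℝ V₁ (ρ2 a) := by
  rw [← sum_leeTerm_twBr_inl (ρ2 := ρ1) (J1 := J2) hl2 hl1 hk2 hk1 hJ1 hcomm b2 b1 hb1 a,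
    Fintype.sum_sum_type, Fintype.sum_sum_type, add_comm]
  congr 1 <;> exact Finset.sum_congr rfl fun _ _ => leeTerm_swap .. |>.symm

end TwistedProduct

theorem lee_form_of_twisted_product_general
    {V₁ V₂ : Type*} [AddCommGroup V₁] [Module ℝ V₁]
    [AddCommGroup V₂] [Module ℝ V₂]
    (l1 : V₁ → V₁ → V₁) (l2 : V₂ → V₂ → V₂)
    (hl1 : IsLieBracket l1) (hl2 : IsLieBracket l2)
    (J1 : Module.End ℝ V₁) (J2 : Module.End ℝ V₂)
    (k1 : V₁ → V₁ → ℝ) (k2 : V₂ → V₂ → ℝ)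
    (hH1 : IsHermitian l1 (⇑J1) k1) (hH2 : IsHermitian l2 (⇑J2) k2)
    (ρ1 : V₁ →ₗ[ℝ] Module.End ℝ V₂) (ρ2 : V₂ →ₗ[ℝ] Module.End ℝ V₁)
    (hcomm1 : ∀ x : V₁, ρ1 x * J2 = J2 * ρ1 x)
    (hcomm2 : ∀ a : V₂, ρ2 a * J1 = J1 * ρ2 a)
    {ι₁ ι₂ : Type*} [Fintype ι₁] [DecidableEq ι₁] [Fintype ι₂] [DecidableEq ι₂]
    (b1 : Module.Basis ι₁ ℝ V₁) (hb1 : Orthonormal' k1 ⇑b1)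
    (b2 : Module.Basis ι₂ ℝ V₂) (hb2 : Orthonormal' k2 ⇑b2)
    (nab1 : V₁ → V₁ → V₁) (hnab1 : IsLeviCivita k1 l1 nab1)
    (nab2 : V₂ → V₂ → V₂) (hnab2 : IsLeviCivita k2 l2 nab2)
    (nab : V₁ × V₂ → V₁ × V₂ → V₁ × V₂)
    (hnab : IsLeviCivita (prodK k1 k2)
      (twBr l1 l2 (fun x a => ρ1 x a) (fun a x => ρ2 a x)) nab)
    :
    (∀ x : V₁,
      leeForm (Sum.elim (fun i => ((b1 i : V₁), (0 : V₂)))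
          (fun j => ((0 : V₁), (b2 j : V₂)))) nab (prodK k1 k2)
          (prodJ (⇑J1) (⇑J2)) (x, 0) =
        leeForm (⇑b1) nab1 k1 (⇑J1) x - LinearMap.trace ℝ V₂ (ρ1 x)) ∧
    (∀ a : V₂,
      leeForm (Sum.elim (fun i => ((b1 i : V₁), (0 : V₂)))
          (fun j => ((0 : V₁), (b2 j : V₂)))) nab (prodK k1 k2)
          (prodJ (⇑J1) (⇑J2)) (0, a) =
        leeForm (⇑b2) nab2 k2 (⇑J2) a - LinearMap.trace ℝ V₁ (ρ2 a)) := by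
  obtain ⟨⟨hk1, hk1sym, -⟩, hJ1, -, hk1J⟩ := hH1
  obtain ⟨⟨hk2, hk2sym, -⟩, hJ2, -, hk2J⟩ := hH2
  have hKsym := prodK_comm hk1sym hk2sym
  have hKJ := prodK_prodJ hk1J hk2J
  refine ⟨fun x => ?_, fun a => ?_⟩
  · rw [← mul_right_inj' (two_ne_zero' ℝ), mul_sub, two_mul_leeForm hKsym hKJ hnab,
      two_mul_leeForm hk1sym hk1J hnab1, sum_leeTerm_twBr_inl hl1.1 hl2.1 hk1 hk2
        (apply_complexStructure_left hk2 hJ2 hk2J) hcomm1 _ b2 hb2]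
    ring
  · rw [← mul_right_inj' (two_ne_zero' ℝ), mul_sub, two_mul_leeForm hKsym hKJ hnab,
      two_mul_leeForm hk2sym hk2J hnab2, sum_leeTerm_twBr_inr hl1.1 hl2.1 hk1 hk2
        (apply_complexStructure_left hk1 hJ1 hk1J) hcomm2 b1 hb1]
    ring

/-- the Lee form of a Hermitian twisted cartesian product. -/
theorem lee_form_of_twisted_product
    {V₁ V₂ : Type*} [AddCommGroup V₁] [Module ℝ V₁] [FiniteDimensional ℝ V₁]
    [AddCommGroup V₂] [Module ℝ V₂] [FiniteDimensional ℝ V₂]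
    (l1 : V₁ → V₁ → V₁) (l2 : V₂ → V₂ → V₂)
    (hl1 : IsLieBracket l1) (hl2 : IsLieBracket l2)
    (J1 : Module.End ℝ V₁) (J2 : Module.End ℝ V₂)
    (k1 : V₁ → V₁ → ℝ) (k2 : V₂ → V₂ → ℝ)
    (hH1 : IsHermitian l1 (⇑J1) k1) (hH2 : IsHermitian l2 (⇑J2) k2)
    (ρ1 : V₁ →ₗ[ℝ] Module.End ℝ V₂) (ρ2 : V₂ →ₗ[ℝ] Module.End ℝ V₁)
    (hd1 : ∀ x, IsDeriv l2 (ρ1 x)) (hd2 : ∀ a, IsDeriv l1 (ρ2 a))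
    (hrep1 : ∀ x y, ρ1 (l1 x y) = ρ1 x * ρ1 y - ρ1 y * ρ1 x)
    (hrep2 : ∀ a b, ρ2 (l2 a b) = ρ2 a * ρ2 b - ρ2 b * ρ2 a)
    (hcompat : Compat (fun x a => ρ1 x a) (fun a x => ρ2 a x))
    (hcomm1 : ∀ x : V₁, ρ1 x * J2 = J2 * ρ1 x)
    (hcomm2 : ∀ a : V₂, ρ2 a * J1 = J1 * ρ2 a)
    {ι₁ ι₂ : Type*} [Fintype ι₁] [DecidableEq ι₁] [Fintype ι₂] [DecidableEq ι₂]
    (b1 : Module.Basis ι₁ ℝ V₁) (hb1 : Orthonormal' k1 ⇑b1)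
    (b2 : Module.Basis ι₂ ℝ V₂) (hb2 : Orthonormal' k2 ⇑b2)
    (nab1 : V₁ → V₁ → V₁) (hnab1 : IsLeviCivita k1 l1 nab1)
    (nab2 : V₂ → V₂ → V₂) (hnab2 : IsLeviCivita k2 l2 nab2)
    (nab : V₁ × V₂ → V₁ × V₂ → V₁ × V₂)
    (hnab : IsLeviCivita (prodK k1 k2)
      (twBr l1 l2 (fun x a => ρ1 x a) (fun a x => ρ2 a x)) nab)
    :
    (∀ x : V₁,
      leeForm (Sum.elim (fun i => ((b1 i : V₁), (0 : V₂)))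
          (fun j => ((0 : V₁), (b2 j : V₂)))) nab (prodK k1 k2)
          (prodJ (⇑J1) (⇑J2)) (x, 0) =
        leeForm (⇑b1) nab1 k1 (⇑J1) x - LinearMap.trace ℝ V₂ (ρ1 x)) ∧
    (∀ a : V₂,
      leeForm (Sum.elim (fun i => ((b1 i : V₁), (0 : V₂)))
          (fun j => ((0 : V₁), (b2 j : V₂)))) nab (prodK k1 k2)
          (prodJ (⇑J1) (⇑J2)) (0, a) =
        leeForm (⇑b2) nab2 k2 (⇑J2) a - LinearMap.trace ℝ V₁ (ρ2 a)) :=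
  lee_form_of_twisted_product_general l1 l2 hl1 hl2 J1 J2 k1 k2 hH1 hH2 ρ1 ρ2 hcomm1 hcomm2 b1 hb1
    b2 hb2 nab1 hnab1 nab2 hnab2 nab hnab
end

section
/- Let g be the 6-dimensional real Lie algebra with basis e_1,…,e_6 and nonzero brackets [e_1,e_3] = e_1 − x·e_2, [e_2,e_3] = x·e_1 + e_2, [e_1,e_6] = −t·e_2, [e_2,e_6] = t·e_1, [e_3,e_4] = e_4, [e_3,e_5] = e_5 (for fixed real parameters x, t). Then g is a Lie algebra, the endomorphism J defined by J(e_1) = e_2, J(e_3) = e_6, J(e_4) = e_5 (and J² = −Id) has vanishing Nijenhuis tensor, and for any σ > 0 the inner product making e_1,…,e_6 orthogonal with |e_1| = |e_2| = |e_4| = |e_5| = 1 and |e_3|² = |e_6|² = σ is compatible with J and the resulting Hermitian structure is balanced (its Lee form vanishes). -/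
open scoped BigOperators

/-- The bracket of ℝ² ⋈ rr_{3,1} with parameters x, t (indices 0,…,5 stand for
e₁,…,e₆): [e₁,e₃]=e₁−x e₂, [e₂,e₃]=x e₁+e₂, [e₁,e₆]=−t e₂, [e₂,e₆]=t e₁,
[e₃,e₄]=e₄, [e₃,e₅]=e₅. -/
def br11 (x t : ℝ) (u v : Fin 6 → ℝ) : Fin 6 → ℝ :=
  ![(u 0 * v 2 - u 2 * v 0) + x * (u 1 * v 2 - u 2 * v 1) + t * (u 1 * v 5 - u 5 * v 1),
    -x * (u 0 * v 2 - u 2 * v 0) + (u 1 * v 2 - u 2 * v 1) - t * (u 0 * v 5 - u 5 * v 0),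
    0,
    u 2 * v 3 - u 3 * v 2,
    u 2 * v 4 - u 4 * v 2,
    0]

/-- J(e₁)=e₂, J(e₃)=e₆, J(e₄)=e₅ with J² = −Id. -/
def J11 (u : Fin 6 → ℝ) : Fin 6 → ℝ := ![-u 1, u 0, -u 5, -u 4, u 3, u 2]

/-- The metric with the basis orthogonal, |e₁|=|e₂|=|e₄|=|e₅|=1,
|e₃|²=|e₆|²=σ. -/
def k11 (σ : ℝ) (u v : Fin 6 → ℝ) : ℝ :=
  u 0 * v 0 + u 1 * v 1 + σ * (u 2 * v 2) + u 3 * v 3 + u 4 * v 4 + σ * (u 5 * v 5)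

/-!
Everything except balancedness is a finite computation in coordinates. For the Lee form, the
Koszul formula eliminates `∇`: `2 θ(X)` is the trace, over the orthonormal basis, of a bilinear
form `leeKernel` built from the bracket, `k` and `J`. For the diagonal metric `g`,
orthonormality of `b` forces `∑ i, b i ⊗ b i = g⁻¹`, so this trace is `∑ p, B(e_p, e_p) / g p`
whatever `b` is, and for `ℝ² ⋈ rr_{3,1}` that coordinate sum vanishes identically.
-/

open Finset

section DiagonalInner

variable {n : Type*} [Fintype n]

def diagInner (g : n → ℝ) (u v : n → ℝ) : ℝ := ∑ p, g p * u p * v p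

lemma isInner_diagInner {g : n → ℝ} (hg : ∀ p, 0 < g p) : IsInner (diagInner g) := by
  refine ⟨⟨?_, ?_, ?_, ?_⟩, ?_, fun u hu => ?_⟩
  iterate 5
    (intros
     simp only [diagInner, Pi.add_apply, Pi.smul_apply, smul_eq_mul, mul_sum, ← sum_add_distrib]
     exact sum_congr rfl fun _ _ => by ring)
  obtain ⟨p, hp⟩ := Function.ne_iff.mp hu
  have hterm : ∀ q, 0 ≤ g q * u q * u q := fun q => by
    rw [mul_assoc]; exact mul_nonneg (hg q).le (mul_self_nonneg _)
  exact sum_pos' (fun q _ => hterm q)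
    ⟨p, mem_univ p, by rw [mul_assoc]; exact mul_pos (hg p) (mul_self_pos.mpr hp)⟩

variable [DecidableEq n] {ι : Type*} [Fintype ι] [DecidableEq ι]

lemma sum_mul_of_orthonormal_diagInner {g : n → ℝ} (hg : ∀ p, g p ≠ 0)
    (b : Module.Basis ι ℝ (n → ℝ)) (hb : Orthonormal' (diagInner g) ⇑b) (p q : n) :
    ∑ i, b i p * b i q = if p = q then (g p)⁻¹ else 0 := by
  let e : ι ≃ n := Fintype.equivOfCardEq <| by
    rw [← Module.finrank_eq_card_basis b, Module.finrank_pi]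
  have hMN : (Matrix.of fun i p => b i p) * (Matrix.of fun p j => g p * b j p) = 1 := by
    ext i j
    simpa [Matrix.mul_apply, Matrix.one_apply, diagInner, mul_comm, mul_left_comm] using hb i j
  have hpq := congrFun (congrFun ((Matrix.mul_eq_one_comm_of_equiv e).mp hMN) p) q
  simp only [Matrix.mul_apply, Matrix.of_apply, Matrix.one_apply] at hpq
  have hscale : ∑ i, b i p * b i q = (g p)⁻¹ * ∑ i, g p * b i p * b i q := by
    rw [mul_sum]
    exact sum_congr rfl fun i _ => by field_simp [hg p]
  rw [hscale, hpq]
  split_ifs <;> simp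

lemma sum_apply_self_of_orthonormal_diagInner {g : n → ℝ} (hg : ∀ p, g p ≠ 0)
    (b : Module.Basis ι ℝ (n → ℝ)) (hb : Orthonormal' (diagInner g) ⇑b)
    {B : (n → ℝ) → (n → ℝ) → ℝ} (hB : IsBilinMap B) :
    ∑ i, B (b i) (b i) = ∑ p, (g p)⁻¹ * B (Pi.single p 1) (Pi.single p 1) := by
  set C : n → n → ℝ := fun p q => B (Pi.single p 1) (Pi.single q 1)
  let B₂ := LinearMap.mk₂ ℝ B hB.1 hB.2.1 hB.2.2.1 hB.2.2.2
  have hexpand : ∀ u v, B u v = ∑ p, ∑ q, u p * v q * C p q := fun u v => by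
    calc B u v = Matrix.toLinearMap₂' ℝ (LinearMap.toMatrix₂' ℝ B₂) u v := by
          rw [Matrix.toLinearMap₂'_toMatrix']; rfl
      _ = ∑ p, ∑ q, u p * v q * C p q := by
          simp only [Matrix.toLinearMap₂'_apply, LinearMap.toMatrix₂'_apply, smul_eq_mul, mul_assoc]
          rfl
  calc ∑ i, B (b i) (b i) = ∑ p, ∑ q, (∑ i, b i p * b i q) * C p q := by
        simp only [hexpand, sum_mul]
        rw [sum_comm]
        exact sum_congr rfl fun p _ => sum_comm
    _ = ∑ p, ∑ q, (if p = q then (g p)⁻¹ else 0) * C p q := by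
        simp only [sum_mul_of_orthonormal_diagInner hg b hb]
    _ = ∑ p, (g p)⁻¹ * C p p := by simp [ite_mul]

end DiagonalInner

section LeeForm

variable {V : Type*}

def leeKernel (l : V → V → V) (k : V → V → ℝ) (J : V → V) (X u v : V) : ℝ :=
  -k (l u v) X + 2 * k (l u X) v - k (l u (J X)) (J v) + k (l (J X) (J v)) u
    + k (l u (J v)) (J X)

lemma two_mul_leeForm_eq_sum_leeKernel {ι : Type*} [Fintype ι] (E : ι → V)
    {l nab : V → V → V} {k : V → V → ℝ} {J : V → V} (hk : ∀ u v, k u v = k v u)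
    (hJ : ∀ u v, k (J u) (J v) = k u v) (hnab : IsLeviCivita k l nab) (X : V) :
    2 * leeForm E nab k J X = ∑ i, leeKernel l k J X (E i) (E i) := by
  simp only [leeForm, codiff, fund, neg_neg, mul_sum]
  refine sum_congr rfl fun i _ => ?_
  have hkoszul₁ := hnab (E i) (E i) X
  have hkoszul₂ := hnab (E i) (J X) (J (E i))
  rw [hJ, hk (J (E i))]
  simp only [leeKernel]
  linarith

lemma isBilinMap_leeKernel [AddCommGroup V] [Module ℝ V] {l : V → V → V} {k : V → V → ℝ}
    {J : V → V} (hl : IsBilinMap l) (hk : IsBilinMap k) (hJ : IsLinearMap ℝ J) (X : V) :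
    IsBilinMap (leeKernel l k J X) := by
  obtain ⟨hl₁, hl₂, hl₃, hl₄⟩ := hl
  obtain ⟨hk₁, hk₂, hk₃, hk₄⟩ := hk
  refine ⟨?_, ?_, ?_, ?_⟩ <;> intros <;>
    simp only [leeKernel, hJ.map_add, hJ.map_smul, hl₁, hl₂, hl₃, hl₄, hk₁, hk₂, hk₃, hk₄,
      smul_eq_mul] <;> ring

end LeeForm

lemma isLieBracket_br11 (x t : ℝ) : IsLieBracket (br11 x t) := by
  refine ⟨⟨?_, ?_, ?_, ?_⟩, ?_, fun u v w => ?_⟩ <;> intros <;> funext i <;> fin_cases i <;>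
    simp [br11] <;> ring

lemma J11_J11 (u : Fin 6 → ℝ) : J11 (J11 u) = -u := by
  funext i; fin_cases i <;> simp [J11]

lemma nijenhuis_br11_J11 (x t : ℝ) (u v : Fin 6 → ℝ) : nijenhuis (br11 x t) J11 u v = 0 := by
  funext i; fin_cases i <;> simp [nijenhuis, br11, J11] <;> ring

lemma isLinearMap_J11 : IsLinearMap ℝ J11 where
  map_add u v := by funext i; fin_cases i <;> simp [J11] <;> ring
  map_smul c u := by funext i; fin_cases i <;> simp [J11]

lemma k11_eq_diagInner (σ : ℝ) : k11 σ = diagInner ![1, 1, σ, 1, 1, σ] := by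
  funext u v; simp [k11, diagInner, Fin.sum_univ_six]; ring

lemma k11_J11_J11 (σ : ℝ) (u v : Fin 6 → ℝ) : k11 σ (J11 u) (J11 v) = k11 σ u v := by
  simp [k11, J11]; ring

lemma sum_leeKernel_br11_single (x t σ : ℝ) (X : Fin 6 → ℝ) :
    ∑ p, (![1, 1, σ, 1, 1, σ] p)⁻¹ *
      leeKernel (br11 x t) (k11 σ) J11 X (Pi.single p 1) (Pi.single p 1) = 0 := by
  simp [Fin.sum_univ_six, leeKernel, br11, k11, J11, Pi.single_apply]
  ring

/-- the 6-dimensional algebra ℝ² ⋈ rr_{3,1} is a Lie algebra,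
J is an integrable complex structure, k is a compatible inner product, and the
resulting Hermitian structure is balanced. -/
theorem R2_join_rr31_balanced (x t σ : ℝ) (hσ : 0 < σ) :
    IsLieBracket (br11 x t) ∧
    (∀ u, J11 (J11 u) = -u) ∧
    (∀ u v, nijenhuis (br11 x t) J11 u v = 0) ∧
    IsInner (k11 σ) ∧
    (∀ u v, k11 σ (J11 u) (J11 v) = k11 σ u v) ∧
    (∀ (ι : Type) [Fintype ι] [DecidableEq ι] (b : Module.Basis ι ℝ (Fin 6 → ℝ)),
      Orthonormal' (k11 σ) ⇑b →
      ∀ nab, IsLeviCivita (k11 σ) (br11 x t) nab →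
        ∀ X, leeForm (⇑b) nab (k11 σ) J11 X = 0) := by
  have hweights : ∀ p, 0 < (![1, 1, σ, 1, 1, σ] : Fin 6 → ℝ) p := by
    intro p; fin_cases p <;> simp [hσ]
  have hk : IsInner (k11 σ) := k11_eq_diagInner σ ▸ isInner_diagInner hweights
  refine ⟨isLieBracket_br11 x t, J11_J11, nijenhuis_br11_J11 x t, hk, k11_J11_J11 σ, ?_⟩
  intro ι _ _ b hb nab hnab X
  have hkernel := isBilinMap_leeKernel (isLieBracket_br11 x t).1 hk.1 isLinearMap_J11 X
  have htrace := sum_apply_self_of_orthonormal_diagInner (fun p => (hweights p).ne') b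
    (k11_eq_diagInner σ ▸ hb) hkernel
  have htwice := two_mul_leeForm_eq_sum_leeKernel (⇑b) hk.2.1 (k11_J11_J11 σ) hnab X
  rw [htrace, sum_leeKernel_br11_single] at htwice
  linarith
end
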